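/- arXiv:2005.09186 — 2 statements merged into one kernel-verified Lean document; each statement's English description precedes it below -/
import Mathlib

section
/- Let A = {a1 < a2 < ...} and B = {b1 < b2 < ...} be two infinite sequences of positive integers with b1 > 1 such that P(A) = ℕ \ B, let k be the index with a_k < b1 < a_{k+1}, so that P({a1, ..., a_k}) = [0, b1 − 1]. If b2 ≥ 3·b1 + 5, then P({a1, ..., a_{k+3}}) = [0, a_{k+3} + a_{k+2} + 2·b1] \ {b1, a_{k+3} + a_{k+2} + b1}. -/
/-!
Adjoining `x ∉ S` turns `P(S)` into `P(S) ∪ (x + P(S))`, and the next element of `A` is at most the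
least element of `P(A)` that the current subset sums miss. Below `b₂` the only integer missing from
`P(A)` is `b₁`, and `b₂ ≥ 3b₁ + 5` keeps every integer used below under `b₂`. Starting from
`P(a₁, …, a_k) = [0, b₁ - 1]` this forces `a_{k+1} = b₁ + 1`, `P(a₁, …, a_{k+1}) = [0, 2b₁] \ {b₁}`,
then `a_{k+2} ≤ 2b₁ + 1` and `a_{k+3} ≤ a_{k+2} + b₁`, and each of these bounds is exactly what makes
the next union of two translated intervals gap-free except at the two claimed points.
-/

/-- The set of all finite subset sums of a set of positive integers
(finite sums of distinct elements; the empty sum 0 is included). -/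
def subsetSums (S : Set ℕ) : Set ℕ :=
  {n | ∃ F : Finset ℕ, ↑F ⊆ S ∧ ∑ x ∈ F, x = n}

lemma subsetSums_insert {x : ℕ} {S : Set ℕ} (hx : x ∉ S) :
    subsetSums (insert x S) = subsetSums S ∪ (x + ·) '' subsetSums S := by
  ext n
  constructor
  · rintro ⟨F, hF, rfl⟩
    by_cases hxF : x ∈ F
    · refine Or.inr ⟨∑ y ∈ F.erase x, y, ⟨F.erase x, fun y hy => ?_, rfl⟩,
        Finset.add_sum_erase F id hxF⟩
      rw [Finset.coe_erase] at hy
      exact (hF hy.1).resolve_left hy.2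
    · exact Or.inl ⟨F, fun y hy => (hF hy).resolve_left (by rintro rfl; exact hxF hy), rfl⟩
  · rintro (⟨F, hF, rfl⟩ | ⟨m, ⟨F, hF, rfl⟩, rfl⟩)
    · exact ⟨F, hF.trans (Set.subset_insert x S), rfl⟩
    · have hxF : x ∉ F := fun h => hx (hF h)
      refine ⟨insert x F, ?_, Finset.sum_insert hxF⟩
      rw [Finset.coe_insert]
      exact Set.insert_subset_insert hF

lemma subsetSums_image_Iio_succ {a : ℕ → ℕ} (ha : Function.Injective a) (m : ℕ) :
    subsetSums (a '' Set.Iio (m + 1)) =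
      subsetSums (a '' Set.Iio m) ∪ (a m + ·) '' subsetSums (a '' Set.Iio m) := by
  have hIio : Set.Iio (m + 1) = insert m (Set.Iio m) := by ext; simp
  rw [hIio, Set.image_insert_eq, subsetSums_insert]
  rintro ⟨j, hj, hja⟩
  exact (ha hja ▸ hj : m < m).false

lemma le_of_mem_subsetSums_range_of_notMem {a : ℕ → ℕ} (ha : Monotone a) {n m : ℕ}
    (hn : n ∈ subsetSums (Set.range a)) (hnm : n ∉ subsetSums (a '' Set.Iio m)) :
    a m ≤ n := by
  obtain ⟨F, hF, rfl⟩ := hn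
  obtain ⟨_, hyF, hy⟩ := Set.not_subset.mp fun h => hnm ⟨F, h, rfl⟩
  obtain ⟨j, rfl⟩ := hF hyF
  have hmj : m ≤ j := not_lt.mp fun hjm => hy ⟨j, hjm, rfl⟩
  exact (ha hmj).trans (Finset.single_le_sum (f := id) (fun _ _ => Nat.zero_le _) hyF)

lemma StrictMono.notMem_range_of_ne_apply_zero_of_lt_apply_one {b : ℕ → ℕ}
    (hb : StrictMono b) {n : ℕ} (h0 : n ≠ b 0) (h1 : n < b 1) : n ∉ Set.range b := by
  rintro ⟨_ | j, rfl⟩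
  · exact h0 rfl
  · exact (hb.monotone (Nat.le_add_left 1 j)).not_gt h1

lemma Nat.mem_image_const_add_iff {x n : ℕ} {S : Set ℕ} :
    n ∈ (x + ·) '' S ↔ x ≤ n ∧ n - x ∈ S := by
  constructor
  · rintro ⟨m, hm, rfl⟩
    simpa using hm
  · rintro ⟨hxn, hn⟩
    exact ⟨n - x, hn, Nat.add_sub_cancel' hxn⟩

lemma Icc_union_image_const_add_Icc {c : ℕ} (hc : 0 < c) :
    Set.Icc 0 (c - 1) ∪ (c + 1 + ·) '' Set.Icc 0 (c - 1) = Set.Icc 0 (2 * c) \ {c} := by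
  ext n
  simp only [Set.mem_union, Nat.mem_image_const_add_iff, Set.mem_Icc, Set.mem_sdiff,
    Set.mem_singleton_iff]
  omega

lemma Icc_diff_union_image_const_add {c x : ℕ} (hcx : c < x) (hx : x ≤ 2 * c + 1) :
    Set.Icc 0 (2 * c) \ {c} ∪ (x + ·) '' (Set.Icc 0 (2 * c) \ {c}) =
      Set.Icc 0 (x + 2 * c) \ {c, x + c} := by
  ext n
  simp only [Set.mem_union, Nat.mem_image_const_add_iff, Set.mem_Icc, Set.mem_sdiff,
    Set.mem_singleton_iff, Set.mem_insert_iff]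
  omega

lemma Icc_diff_pair_union_image_const_add {c x y : ℕ} (hcx : c < x) (hxy : x < y)
    (hy : y ≤ x + c) :
    Set.Icc 0 (x + 2 * c) \ {c, x + c} ∪ (y + ·) '' (Set.Icc 0 (x + 2 * c) \ {c, x + c}) =
      Set.Icc 0 (y + x + 2 * c) \ {c, y + x + c} := by
  ext n
  simp only [Set.mem_union, Nat.mem_image_const_add_iff, Set.mem_Icc, Set.mem_sdiff,
    Set.mem_singleton_iff, Set.mem_insert_iff]
  omega

theorem stmt4_general (a b : ℕ → ℕ) (ha : StrictMono a)
    (hb : StrictMono b) (hb1 : 1 < b 0)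
    (hPA : subsetSums (Set.range a) = Set.univ \ Set.range b)
    (k : ℕ) (hk2 : b 0 < a (k + 1))
    (hPk : subsetSums (a '' Set.Iio (k + 1)) = Set.Icc 0 (b 0 - 1))
    (hb2 : 3 * b 0 + 5 ≤ b 1) :
    subsetSums (a '' Set.Iio (k + 4)) =
      Set.Icc 0 (a (k + 3) + a (k + 2) + 2 * b 0) \
        ({b 0, a (k + 3) + a (k + 2) + b 0} : Set ℕ) := by
  have a_le : ∀ {n m}, n ≠ b 0 → n < b 1 → n ∉ subsetSums (a '' Set.Iio m) → a m ≤ n :=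
    fun h0 h1 => le_of_mem_subsetSums_range_of_notMem ha.monotone
      (by rw [hPA]; exact ⟨trivial, hb.notMem_range_of_ne_apply_zero_of_lt_apply_one h0 h1⟩)
  have step := subsetSums_image_Iio_succ ha.injective
  have hb0_lt : b 0 < a (k + 2) := hk2.trans (ha (by omega))
  have hak1 : a (k + 1) = b 0 + 1 :=
    le_antisymm (a_le (by omega) (by omega) (by simp [hPk])) hk2
  have hP2 : subsetSums (a '' Set.Iio (k + 2)) = Set.Icc 0 (2 * b 0) \ {b 0} := by
    rw [step, hPk, hak1, Icc_union_image_const_add_Icc (by omega)]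
  have hak2 : a (k + 2) ≤ 2 * b 0 + 1 := a_le (by omega) (by omega) (by simp [hP2])
  have hP3 : subsetSums (a '' Set.Iio (k + 3)) =
      Set.Icc 0 (a (k + 2) + 2 * b 0) \ {b 0, a (k + 2) + b 0} := by
    rw [step, hP2, Icc_diff_union_image_const_add hb0_lt hak2]
  have hak3 : a (k + 3) ≤ a (k + 2) + b 0 := a_le (by omega) (by omega) (by simp [hP3])
  rw [step, hP3, Icc_diff_pair_union_image_const_add hb0_lt (ha (by omega)) hak3]

/-- If `b₂ ≥ 3b₁+5` then
`P({a₁,…,a_{k+3}}) = [0, a_{k+3}+a_{k+2}+2b₁] \ {b₁, a_{k+3}+a_{k+2}+b₁}`.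
Here `a i`, `b i` are the `(i+1)`-st elements of `A`, `B`. -/
theorem stmt4 (a b : ℕ → ℕ) (ha : StrictMono a) (hapos : ∀ i, 0 < a i)
    (hb : StrictMono b) (hb1 : 1 < b 0)
    (hPA : subsetSums (Set.range a) = Set.univ \ Set.range b)
    (k : ℕ) (hk1 : a k < b 0) (hk2 : b 0 < a (k + 1))
    (hPk : subsetSums (a '' Set.Iio (k + 1)) = Set.Icc 0 (b 0 - 1))
    (hb2 : 3 * b 0 + 5 ≤ b 1) :
    subsetSums (a '' Set.Iio (k + 4)) =
      Set.Icc 0 (a (k + 3) + a (k + 2) + 2 * b 0) \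
        ({b 0, a (k + 3) + a (k + 2) + b 0} : Set ℕ) :=
  stmt4_general a b ha hb hb1 hPA k hk2 hPk hb2
end

section
/- Let A = {a1 < a2 < ...} and B = {b1 < b2 < ...} be two infinite sequences of positive integers with b1 > 1 such that P(A) = ℕ \ B, and let k be the index with a_k < b1 < a_{k+1}. If b2 ≥ 3·b1 + 5, then P({a1, ..., a_{k+2}}) = [0, a_{k+2} + 2·b1] \ {b1, a_{k+2} + b1}. -/
theorem subsetSums_mono {S T : Set ℕ} (h : S ⊆ T) : subsetSums S ⊆ subsetSums T := by
  rintro n ⟨F, hF, rfl⟩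
  exact ⟨F, hF.trans h, rfl⟩

theorem mem_subsetSums_insert {S : Set ℕ} {x n : ℕ} (hx : x ∉ S) :
    n ∈ subsetSums (insert x S) ↔ n ∈ subsetSums S ∨ x ≤ n ∧ n - x ∈ subsetSums S := by
  constructor
  · rintro ⟨F, hF, rfl⟩
    by_cases hxF : x ∈ F
    · have hle : x ≤ ∑ y ∈ F, y := Finset.single_le_sum (f := id) (fun _ _ => Nat.zero_le _) hxF
      refine .inr ⟨hle, F.erase x, fun y hy => ?_, ?_⟩
      · have hy' := Finset.mem_erase.mp hy
        exact (Set.mem_insert_iff.mp (hF hy'.2)).resolve_left hy'.1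
      · rw [← Finset.sum_erase_add F _ hxF, Nat.add_sub_cancel]
    · exact .inl ⟨F, fun y hy => (Set.mem_insert_iff.mp (hF hy)).resolve_left
        (fun h => hxF (h ▸ hy)), rfl⟩
  · rintro (hn | ⟨hxn, F, hF, hs⟩)
    · exact subsetSums_mono (Set.subset_insert x S) hn
    · refine ⟨insert x F, ?_, ?_⟩
      · rw [Finset.coe_insert]
        exact Set.insert_subset_insert hF
      · rw [Finset.sum_insert (fun h => hx (hF h)), hs]
        omega

section Sequence

variable {a : ℕ → ℕ}

theorem mem_subsetSums_image_Iio_succ (ha : Function.Injective a) {m n : ℕ} :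
    n ∈ subsetSums (a '' Set.Iio (m + 1)) ↔
      n ∈ subsetSums (a '' Set.Iio m) ∨ a m ≤ n ∧ n - a m ∈ subsetSums (a '' Set.Iio m) := by
  rw [Set.Iio_add_one_eq_Iic, ← Set.Iio_insert, Set.image_insert_eq]
  exact mem_subsetSums_insert fun ⟨j, hj, h⟩ => (ha h ▸ hj : m < m).false

theorem subsetSums_image_Iio_subset (ha : Function.Injective a) (m : ℕ) :
    subsetSums (a '' Set.Iio m) ⊆ Set.Iic (∑ j ∈ Finset.range m, a j) := by
  rintro n ⟨F, hF, rfl⟩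
  have hF' : F ⊆ (Finset.range m).image a := by
    intro x hx
    obtain ⟨j, hj, rfl⟩ := hF hx
    exact Finset.mem_image_of_mem a (Finset.mem_range.mpr hj)
  calc ∑ x ∈ F, x ≤ ∑ x ∈ (Finset.range m).image a, x := Finset.sum_le_sum_of_subset hF'
    _ = ∑ j ∈ Finset.range m, a j := Finset.sum_image fun _ _ _ _ h => ha h

/-- Brown's completeness criterion. -/
theorem subsetSums_image_Iio_eq_Iic (ha : Function.Injective a) {m : ℕ}
    (hcomplete : ∀ i < m, a i ≤ ∑ j ∈ Finset.range i, a j + 1) :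
    subsetSums (a '' Set.Iio m) = Set.Iic (∑ j ∈ Finset.range m, a j) := by
  induction m with
  | zero => ext n; simp [subsetSums]
  | succ m ih =>
    ext n
    rw [mem_subsetSums_image_Iio_succ ha, ih fun i hi => hcomplete i (by omega),
      Finset.sum_range_succ]
    have := hcomplete m (by omega)
    simp only [Set.mem_Iic]
    omega

/-- A sum below `a m` only involves `a 0, …, a (m-1)`. -/
theorem le_of_sum_range_lt_of_mem_subsetSums (ha : StrictMono a) {m n : ℕ}
    (hn : n ∈ subsetSums (Set.range a)) (hlt : ∑ j ∈ Finset.range m, a j < n) : a m ≤ n := by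
  by_contra! hnm
  obtain ⟨F, hF, rfl⟩ := hn
  have hFm : ↑F ⊆ a '' Set.Iio m := by
    intro x hx
    obtain ⟨j, rfl⟩ := hF hx
    have hle : a j ≤ ∑ x ∈ F, x := Finset.single_le_sum (f := id) (fun _ _ => Nat.zero_le _) hx
    exact ⟨j, ha.lt_iff_lt.mp (hle.trans_lt hnm), rfl⟩
  exact (subsetSums_image_Iio_subset ha.injective m ⟨F, hFm, rfl⟩ : _ ≤ _).not_gt hlt

theorem le_sum_range_add_one_of_lt (ha : StrictMono a) {c : ℕ}
    (hc : ∀ n < c, n ∈ subsetSums (Set.range a)) {i : ℕ} (hi : a i < c) :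
    a i ≤ ∑ j ∈ Finset.range i, a j + 1 := by
  by_contra! h
  exact h.not_ge (le_of_sum_range_lt_of_mem_subsetSums ha (hc _ (by omega)) (Nat.lt_succ_self _))

theorem subsetSums_image_Iio_succ_eq_Iic_of_lt (ha : StrictMono a) {c k : ℕ}
    (hc : ∀ n < c, n ∈ subsetSums (Set.range a)) (hk : a k < c) :
    subsetSums (a '' Set.Iio (k + 1)) = Set.Iic (∑ j ∈ Finset.range (k + 1), a j) :=
  subsetSums_image_Iio_eq_Iic ha.injective fun _ hi =>
    le_sum_range_add_one_of_lt ha hc ((ha.monotone (Nat.lt_succ_iff.mp hi)).trans_lt hk)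

theorem sum_range_add_one_eq_of_notMem_subsetSums (ha : StrictMono a) {c k : ℕ}
    (hc : ∀ n < c, n ∈ subsetSums (Set.range a)) (hcP : c ∉ subsetSums (Set.range a))
    (hk1 : a k < c) (hk2 : c < a (k + 1)) :
    ∑ j ∈ Finset.range (k + 1), a j + 1 = c := by
  have hlt : ∑ j ∈ Finset.range (k + 1), a j < c := by
    by_contra! h
    refine hcP (subsetSums_mono (Set.image_subset_range a (Set.Iio (k + 1))) ?_)
    rw [subsetSums_image_Iio_succ_eq_Iic_of_lt ha hc hk1]
    exact h
  have hge : ¬ ∑ j ∈ Finset.range (k + 1), a j < c - 1 := fun h =>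
    (le_of_sum_range_lt_of_mem_subsetSums ha (hc _ (by omega)) h).not_gt (by omega)
  omega

end Sequence

theorem StrictMono.notMem_range_of_lt_of_ne {b : ℕ → ℕ} (hb : StrictMono b) {n : ℕ}
    (hn : n < b 1) (hn0 : n ≠ b 0) : n ∉ Set.range b
  | ⟨0, h⟩ => hn0 h.symm
  | ⟨i + 1, h⟩ => (hb.monotone (Nat.le_add_left 1 i)).not_gt (h ▸ hn)

theorem stmt6_general (a b : ℕ → ℕ) (ha : StrictMono a)
    (hb : StrictMono b)
    (hPA : subsetSums (Set.range a) = Set.univ \ Set.range b)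
    (k : ℕ) (hk1 : a k < b 0) (hk2 : b 0 < a (k + 1))
    (hb2 : 3 * b 0 + 5 ≤ b 1) :
    subsetSums (a '' Set.Iio (k + 3)) =
      Set.Icc 0 (a (k + 2) + 2 * b 0) \ {b 0, a (k + 2) + b 0} := by
  have hb0 : b 0 ∉ subsetSums (Set.range a) := by simp [hPA]
  have hmem : ∀ n < b 1, n ≠ b 0 → n ∈ subsetSums (Set.range a) := fun n hn hn0 => by
    rw [hPA]
    exact ⟨trivial, hb.notMem_range_of_lt_of_ne hn hn0⟩
  have hlt : ∀ n < b 0, n ∈ subsetSums (Set.range a) := fun n hn => hmem n (by omega) (by omega)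
  have hS : ∑ j ∈ Finset.range (k + 1), a j + 1 = b 0 :=
    sum_range_add_one_eq_of_notMem_subsetSums ha hlt hb0 hk1 hk2
  have hak1 : a (k + 1) = b 0 + 1 :=
    le_antisymm (le_of_sum_range_lt_of_mem_subsetSums ha (hmem _ (by omega) (by omega))
      (by omega)) hk2
  have hak2 : a (k + 2) ≤ 2 * b 0 + 1 :=
    le_of_sum_range_lt_of_mem_subsetSums ha (hmem _ (by omega) (by omega))
      (by rw [Finset.sum_range_succ]; omega)
  have := ha (show k + 1 < k + 2 by omega)
  ext n
  simp only [mem_subsetSums_image_Iio_succ ha.injective (m := k + 2),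
    mem_subsetSums_image_Iio_succ ha.injective (m := k + 1),
    subsetSums_image_Iio_succ_eq_Iic_of_lt ha hlt hk1, Set.mem_Iic, Set.mem_sdiff, Set.mem_Icc,
    Set.mem_insert_iff, Set.mem_singleton_iff]
  omega

/-- If `b₂ ≥ 3b₁+5` then `P({a₁,…,a_{k+2}}) = [0, a_{k+2}+2b₁] \ {b₁, a_{k+2}+b₁}`.
Here `a i`, `b i` are the `(i+1)`-st elements of `A`, `B`. -/
theorem stmt6 (a b : ℕ → ℕ) (ha : StrictMono a) (hapos : ∀ i, 0 < a i)
    (hb : StrictMono b) (hb1 : 1 < b 0)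
    (hPA : subsetSums (Set.range a) = Set.univ \ Set.range b)
    (k : ℕ) (hk1 : a k < b 0) (hk2 : b 0 < a (k + 1))
    (hb2 : 3 * b 0 + 5 ≤ b 1) :
    subsetSums (a '' Set.Iio (k + 3)) =
      Set.Icc 0 (a (k + 2) + 2 * b 0) \ {b 0, a (k + 2) + b 0} :=
  stmt6_general a b ha hb hPA k hk1 hk2 hb2
end
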